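/- arXiv:2102.11454 — 4 statements merged into one kernel-verified Lean document; each statement's English description precedes it below -/
import Mathlib

section
/- There is a constant C > 0 such that for all integers m ≥ 5 and all l, k ≥ 0 with 1 ≤ l + k ≤ ⌊m/2⌋ and l + k ≤ m, the quantity binom(m, l+k) · (l+k-3)! · (l+k)^{3/2} · (m-k-l-3)! / (m-3)! is at most C. -/
/-!
Write `n = l + k` and `q = m - n`, so that `m ≤ 2q`. After expanding the binomial coefficient the
quantity is `m(m-1)(m-2) (q-3)! / q!` times `n^{3/2} (n-3)! / n!`. The first factor is at most `24`
because `m ≤ 2q`, the second at most `2` because `n^{3/2} ≤ n^2`; hence `C = 48`.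
-/

open Nat

namespace Nat

theorem factorial_sub_three_mul_sq_le (n : ℕ) : (n - 3)! * n ^ 2 ≤ 2 * n ! := by
  rcases lt_or_ge n 3 with hn | hn
  · interval_cases n <;> decide
  · obtain ⟨c, rfl⟩ := Nat.exists_eq_add_of_le' hn
    rw [Nat.add_sub_cancel, factorial_succ, factorial_succ, factorial_succ]
    have : c + 3 ≤ 2 * ((c + 2) * (c + 1)) := by nlinarith
    calc c ! * (c + 3) ^ 2 ≤ c ! * (c + 3) * (2 * ((c + 2) * (c + 1))) := by
          rw [sq, ← mul_assoc]; gcongr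
      _ = _ := by ring

theorem descFactorial_three_mul_factorial_sub_three_le {m q : ℕ} (h : m ≤ 2 * q) :
    m.descFactorial 3 * (q - 3)! ≤ 24 * q ! := by
  rcases lt_or_ge q 3 with hq | hq
  · interval_cases q <;> interval_cases m <;> decide
  · obtain ⟨c, rfl⟩ := Nat.exists_eq_add_of_le' hq
    rw [Nat.add_sub_cancel, factorial_succ, factorial_succ, factorial_succ]
    have hm : m.descFactorial 3 ≤ (2 * c + 6) * (2 * c + 5) * (2 * c + 4) := by
      calc m.descFactorial 3 ≤ (2 * c + 6).descFactorial 3 := descFactorial_le 3 (by omega)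
        _ = (2 * c + 6) * (2 * c + 5) * (2 * c + 4) := by
          simp only [descFactorial_succ, reduceSubDiff, Nat.add_one_sub_one, tsub_zero,
            descFactorial_zero, mul_one]
          ring
    calc m.descFactorial 3 * c ! ≤ (2 * c + 6) * (2 * c + 5) * (2 * c + 4) * c ! := by gcongr
      _ ≤ 24 * ((c + 3) * (c + 2) * (c + 1)) * c ! := by gcongr ?_ * _; nlinarith
      _ = _ := by ring

theorem choose_mul_factorial_sub_three_mul_sq_le {m n : ℕ} (h : 2 * n ≤ m) :
    m.choose n * (n - 3)! * n ^ 2 * (m - n - 3)! ≤ 48 * (m - 3)! := by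
  obtain hm | hm := lt_or_ge m 3
  · have : n ≤ 1 := by omega
    interval_cases m <;> interval_cases n <;> decide
  have hnm : n ≤ m := by omega
  refine Nat.le_of_mul_le_mul_right (c := n ! * (m - n)!) ?_ (by positivity)
  calc m.choose n * (n - 3)! * n ^ 2 * (m - n - 3)! * (n ! * (m - n)!)
      = m.choose n * n ! * (m - n)! * ((n - 3)! * n ^ 2) * (m - n - 3)! := by ring
    _ = (m - 3)! * ((n - 3)! * n ^ 2) * (m.descFactorial 3 * (m - n - 3)!) := by
        rw [choose_mul_factorial_mul_factorial hnm, ← factorial_mul_descFactorial hm]; ring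
    _ ≤ (m - 3)! * (2 * n !) * (24 * (m - n)!) := by
        gcongr (m - 3)! * ?_ * ?_
        · exact factorial_sub_three_mul_sq_le n
        · exact descFactorial_three_mul_factorial_sub_three_le (by omega)
    _ = 48 * (m - 3)! * (n ! * (m - n)!) := by ring

end Nat

theorem Nat.rpow_three_halves_le_sq (n : ℕ) : (n : ℝ) ^ ((3 : ℝ) / 2) ≤ (n : ℝ) ^ 2 := by
  rcases Nat.eq_zero_or_pos n with rfl | hn
  · norm_num
  · rw [← Real.rpow_natCast]
    exact Real.rpow_le_rpow_of_exponent_le (by exact_mod_cast hn) (by norm_num)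

/-- There is `C > 0` so that for all `m ≥ 5`, `1 ≤ l + k ≤ ⌊m/2⌋`, `l + k ≤ m`,
`binom(m, l+k) (l+k-3)! (l+k)^{3/2} (m-k-l-3)! / (m-3)! ≤ C`
(with the convention `n! = 1` for negative `n`, realized by truncated subtraction). -/
theorem stmt3 : ∃ C : ℝ, 0 < C ∧ ∀ m l k : ℕ, 5 ≤ m → 1 ≤ l + k → l + k ≤ m / 2 → l + k ≤ m →
    (Nat.choose m (l + k) : ℝ) * (Nat.factorial (l + k - 3) : ℝ) *
        ((l + k : ℝ) ^ ((3 : ℝ) / 2)) * (Nat.factorial (m - k - l - 3) : ℝ) /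
        (Nat.factorial (m - 3) : ℝ) ≤ C := by
  refine ⟨48, by norm_num, fun m l k _ _ hhalf _ => ?_⟩
  rw [show m - k - l = m - (l + k) by omega, div_le_iff₀ (by positivity)]
  have key := Nat.choose_mul_factorial_sub_three_mul_sq_le (m := m) (n := l + k) (by omega)
  calc (m.choose (l + k) : ℝ) * (l + k - 3)! * ((l + k : ℝ) ^ ((3 : ℝ) / 2)) * (m - (l + k) - 3)!
      ≤ (m.choose (l + k) : ℝ) * (l + k - 3)! * ((l + k : ℕ) : ℝ) ^ 2 * (m - (l + k) - 3)! := by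
        gcongr
        exact_mod_cast Nat.rpow_three_halves_le_sq (l + k)
    _ ≤ 48 * (m - 3)! := by exact_mod_cast key
end

section
/- There is a constant C > 0 such that for all integers m ≥ 7 and all l, k ≥ 0 with ⌊m/2⌋ + 1 ≤ l + k ≤ m - 3, one has binom(m, l+k) · (l+k-3)! · (m-l-k-2)! · (m-l-k-1)^{1/2} / (m-3)! ≤ C. -/
/-- There is `C > 0` so that for all `m ≥ 7` and `⌊m/2⌋ + 1 ≤ l + k ≤ m - 3`,
`binom(m, l+k) (l+k-3)! (m-l-k-2)! (m-l-k-1)^{1/2} / (m-3)! ≤ C`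
(with the convention `n! = 1` for negative `n`). -/
theorem stmt4 : ∃ C : ℝ, 0 < C ∧ ∀ m l k : ℕ, 7 ≤ m → m / 2 + 1 ≤ l + k → l + k ≤ m - 3 →
    (Nat.choose m (l + k) : ℝ) * (Nat.factorial (l + k - 3) : ℝ) *
        (Nat.factorial (m - l - k - 2) : ℝ) * ((m - l - k - 1 : ℕ) : ℝ) ^ ((1 : ℝ) / 2) /
        (Nat.factorial (m - 3) : ℝ) ≤ C := by
  refine ⟨12, by norm_num, fun m l k hm h1 h2 => ?_⟩
  obtain ⟨a, ha⟩ : ∃ a, l + k = a + 4 := ⟨l + k - 4, by omega⟩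
  obtain ⟨b, hb⟩ : ∃ b, m = a + b + 7 := ⟨m - a - 7, by omega⟩
  have hba : b ≤ a := by omega
  rw [show Nat.choose m (l+k) = Nat.choose (a+b+7) (a+4) by rw [hb, ha],
      show l + k - 3 = a + 1 by omega,
      show m - l - k - 2 = b + 1 by omega,
      show m - l - k - 1 = b + 2 by omega,
      show m - 3 = a + b + 4 by omega]
  -- factorial identities
  have id1 : Nat.choose (a+b+7) (a+4) * Nat.factorial (a+4) * Nat.factorial (b+3)
      = Nat.factorial (a+b+7) := by
    have := Nat.choose_mul_factorial_mul_factorial (show a+4 ≤ a+b+7 by omega)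
    simpa [show a+b+7-(a+4) = b+3 by omega] using this
  have id2 : Nat.factorial (a+1) * ((a+2)*(a+3)*(a+4)) = Nat.factorial (a+4) := by
    simp [Nat.factorial]; ring
  have id3 : Nat.factorial (b+1) * ((b+2)*(b+3)) = Nat.factorial (b+3) := by
    simp [Nat.factorial]; ring
  have id4 : Nat.factorial (a+b+4) * ((a+b+5)*(a+b+6)*(a+b+7)) = Nat.factorial (a+b+7) := by
    simp [Nat.factorial]; ring
  -- polynomial inequality
  have poly : (a+b+5)*(a+b+6)*(a+b+7) ≤ 12*((a+2)*(a+3)*(a+4)*(b+3)) := by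
    calc (a+b+5)*(a+b+6)*(a+b+7) ≤ (2*a+6)*(2*a+6)*(2*a+8) := by
          apply Nat.mul_le_mul (Nat.mul_le_mul (by omega) (by omega)) (by omega)
      _ = (8*(a+3))*((a+3)*(a+4)) := by ring
      _ ≤ (36*(a+2))*((a+3)*(a+4)) := Nat.mul_le_mul (by omega) le_rfl
      _ = 12*((a+2)*(a+3)*(a+4)*3) := by ring
      _ ≤ 12*((a+2)*(a+3)*(a+4)*(b+3)) := by gcongr; omega
  -- key natural number inequality
  have key : Nat.choose (a+b+7) (a+4) * Nat.factorial (a+1) * Nat.factorial (b+1) * (b+2)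
      ≤ 12 * Nat.factorial (a+b+4) := by
    have hP : 0 < (a+2)*(a+3)*(a+4)*(b+3) := by positivity
    apply Nat.le_of_mul_le_mul_right _ hP
    calc Nat.choose (a+b+7) (a+4) * Nat.factorial (a+1) * Nat.factorial (b+1) * (b+2)
          * ((a+2)*(a+3)*(a+4)*(b+3))
        = Nat.choose (a+b+7) (a+4) * (Nat.factorial (a+1) * ((a+2)*(a+3)*(a+4)))
          * (Nat.factorial (b+1) * ((b+2)*(b+3))) := by ring
      _ = Nat.factorial (a+b+7) := by rw [id2, id3]; exact id1
      _ = Nat.factorial (a+b+4) * ((a+b+5)*(a+b+6)*(a+b+7)) := id4.symm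
      _ ≤ Nat.factorial (a+b+4) * (12*((a+2)*(a+3)*(a+4)*(b+3))) :=
          Nat.mul_le_mul le_rfl poly
      _ = 12 * Nat.factorial (a+b+4) * ((a+2)*(a+3)*(a+4)*(b+3)) := by ring
  -- real part
  have hFpos : (0:ℝ) < (Nat.factorial (a+b+4) : ℝ) := by positivity
  rw [div_le_iff₀ hFpos]
  have hx : ((b+2 : ℕ) : ℝ) ^ ((1:ℝ)/2) ≤ ((b+2 : ℕ) : ℝ) := by
    calc ((b+2 : ℕ) : ℝ) ^ ((1:ℝ)/2) ≤ ((b+2 : ℕ) : ℝ) ^ (1:ℝ) :=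
          Real.rpow_le_rpow_of_exponent_le (by push_cast; linarith) (by norm_num)
      _ = _ := Real.rpow_one _
  calc (Nat.choose (a+b+7) (a+4) : ℝ) * (Nat.factorial (a+1) : ℝ) * (Nat.factorial (b+1) : ℝ)
        * ((b+2 : ℕ) : ℝ) ^ ((1:ℝ)/2)
      ≤ (Nat.choose (a+b+7) (a+4) : ℝ) * (Nat.factorial (a+1) : ℝ) * (Nat.factorial (b+1) : ℝ)
        * ((b+2 : ℕ) : ℝ) := by
        apply mul_le_mul_of_nonneg_left hx (by positivity)
    _ = ((Nat.choose (a+b+7) (a+4) * Nat.factorial (a+1) * Nat.factorial (b+1) * (b+2) : ℕ) : ℝ) := by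
        push_cast; ring
    _ ≤ ((12 * Nat.factorial (a+b+4) : ℕ) : ℝ) := by exact_mod_cast key
    _ = 12 * (Nat.factorial (a+b+4) : ℝ) := by push_cast; ring
end

section
/- There is a constant C such that for all integers m ≥ 5 and 1 ≤ j ≤ ⌊m/2⌋, the quantity (m! / (j! (m-j)! (m-3)!)) · (j-3)!^{1/4} · (j-1)!^{3/4} · (m-j-2)! / (m-j-2) is at most C. -/
/-- There is `C > 0` so that for all `m ≥ 5` and `1 ≤ j ≤ ⌊m/2⌋`,
`(m! / (j! (m-j)! (m-3)!)) · (j-3)!^{1/4} · (j-1)!^{3/4} · (m-j-2)! / (m-j-2) ≤ C`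
(with `n! = 1` for negative `n`, realized by truncated subtraction). -/
theorem stmt7 : ∃ C : ℝ, 0 < C ∧ ∀ m j : ℕ, 5 ≤ m → 1 ≤ j → j ≤ m / 2 →
    ((Nat.factorial m : ℝ) /
        ((Nat.factorial j : ℝ) * (Nat.factorial (m - j) : ℝ) * (Nat.factorial (m - 3) : ℝ))) *
      ((Nat.factorial (j - 3) : ℝ)) ^ ((1 : ℝ)/4) *
      ((Nat.factorial (j - 1) : ℝ)) ^ ((3 : ℝ)/4) *
      (Nat.factorial (m - j - 2) : ℝ) / ((m - j - 2 : ℕ) : ℝ) ≤ C := by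
  refine ⟨1000, by norm_num, fun m j hm hj hjm => ?_⟩
  obtain ⟨k, hk⟩ : ∃ k, m = k + 3 := ⟨m - 3, by omega⟩
  obtain ⟨l, hl⟩ : ∃ l, m - j = l + 3 := ⟨m - j - 3, by omega⟩
  have hjk : j ≤ k := by omega
  have hlk : l = k - j := by omega
  subst hk
  rw [hl]
  have e2 : l + 3 - 2 = l + 1 := by omega
  have e3 : k + 3 - 3 = k := by omega
  rw [e2, e3]
  have e1 : (Nat.factorial (k+3) : ℝ) =
      ((k:ℝ)+3)*((k:ℝ)+2)*((k:ℝ)+1)*(Nat.factorial k : ℝ) := by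
    show ((Nat.factorial (k+2+1) : ℕ) : ℝ) = _
    rw [Nat.factorial_succ, Nat.factorial_succ, Nat.factorial_succ]
    push_cast; ring
  have e4 : (Nat.factorial (l+3) : ℝ) =
      ((l:ℝ)+3)*((l:ℝ)+2)*(Nat.factorial (l+1) : ℝ) := by
    show ((Nat.factorial (l+2+1) : ℕ) : ℝ) = _
    rw [Nat.factorial_succ, Nat.factorial_succ]
    push_cast; ring
  have hkpos : (0:ℝ) < Nat.factorial k := by positivity
  have hjpos : (0:ℝ) < Nat.factorial j := by positivity
  have hl1pos : (0:ℝ) < Nat.factorial (l+1) := by positivity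
  set X : ℝ := ((Nat.factorial (j - 3) : ℝ)) ^ ((1:ℝ)/4) with hX
  set Y : ℝ := ((Nat.factorial (j - 1) : ℝ)) ^ ((3:ℝ)/4) with hY
  have hXpos : 0 < X := by rw [hX]; positivity
  have hYpos : 0 < Y := by rw [hY]; positivity
  have key : ((Nat.factorial (k+3) : ℝ) /
        ((Nat.factorial j : ℝ) * (Nat.factorial (l+3) : ℝ) * (Nat.factorial k : ℝ))) *
      X * Y * (Nat.factorial (l+1) : ℝ) / ((l + 1 : ℕ) : ℝ) =
      ((((k:ℝ)+3)*((k:ℝ)+2)*((k:ℝ)+1)) / ((((l:ℝ)+3)*((l:ℝ)+2)*((l:ℝ)+1)))) *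
      ((X * Y) / (Nat.factorial j : ℝ)) := by
    rw [e1, e4]
    push_cast
    field_simp
  rw [key]
  have hG : (X * Y) / (Nat.factorial j : ℝ) ≤ 1 := by
    rw [div_le_one hjpos]
    have h1 : X ≤ ((Nat.factorial j : ℝ)) ^ ((1:ℝ)/4) := by
      rw [hX]
      apply Real.rpow_le_rpow (by positivity) _ (by norm_num)
      exact_mod_cast Nat.factorial_le (by omega)
    have h2 : Y ≤ ((Nat.factorial j : ℝ)) ^ ((3:ℝ)/4) := by
      rw [hY]
      apply Real.rpow_le_rpow (by positivity) _ (by norm_num)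
      exact_mod_cast Nat.factorial_le (by omega)
    calc X * Y ≤ ((Nat.factorial j : ℝ)) ^ ((1:ℝ)/4) * ((Nat.factorial j : ℝ)) ^ ((3:ℝ)/4) :=
          mul_le_mul h1 h2 (le_of_lt hYpos) (by positivity)
      _ = ((Nat.factorial j : ℝ)) ^ ((1:ℝ)/4 + (3:ℝ)/4) := (Real.rpow_add hjpos _ _).symm
      _ = Nat.factorial j := by norm_num
  have hR : ((((k:ℝ)+3)*((k:ℝ)+2)*((k:ℝ)+1)) / ((((l:ℝ)+3)*((l:ℝ)+2)*((l:ℝ)+1))) : ℝ) ≤ 1000 := by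
    rw [div_le_iff₀ (by positivity)]
    have hkl : (k:ℝ) + 3 ≤ 10 * ((l:ℝ)+1) := by
      have : k + 3 ≤ 10 * (l + 1) := by omega
      exact_mod_cast this
    have hkl2 : (k:ℝ) + 2 ≤ 10 * ((l:ℝ)+1) := by linarith
    have hkl1 : (k:ℝ) + 1 ≤ 10 * ((l:ℝ)+1) := by linarith
    have hl0 : (0:ℝ) ≤ (l:ℝ) := Nat.cast_nonneg l
    calc ((k:ℝ)+3)*((k:ℝ)+2)*((k:ℝ)+1)
        ≤ (10*((l:ℝ)+1)) * (10*((l:ℝ)+1)) * (10*((l:ℝ)+1)) := by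
          apply mul_le_mul _ hkl1 (by positivity) (by positivity)
          exact mul_le_mul hkl hkl2 (by positivity) (by positivity)
      _ = 1000 * (((l:ℝ)+1)*(((l:ℝ)+1)*((l:ℝ)+1))) := by ring
      _ ≤ 1000 * (((l:ℝ)+3)*(((l:ℝ)+2)*((l:ℝ)+1))) := by
          gcongr <;> linarith
      _ = 1000 * (((l:ℝ)+3)*((l:ℝ)+2)*((l:ℝ)+1)) := by ring
  have hRpos : (0:ℝ) ≤ (((k:ℝ)+3)*((k:ℝ)+2)*((k:ℝ)+1)) / ((((l:ℝ)+3)*((l:ℝ)+2)*((l:ℝ)+1))) := by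
    positivity
  calc _ ≤ (1000 : ℝ) * 1 :=
        mul_le_mul hR hG (by positivity) (by norm_num)
    _ = 1000 := by norm_num
end

section
/- There is a constant C such that for all integers m ≥ 5 and ⌊m/2⌋ + 1 ≤ j ≤ m, the quantity (m! / (j! (m-j)!)) · (j-3)! · (m-j-2)!^{1/4} · (m-j)!^{3/4} / (m-3)! is at most C. -/
lemma fac3_expand (n : ℕ) (h : 3 ≤ n) :
    (Nat.factorial n : ℝ) =
      (Nat.factorial (n - 3) : ℝ) * (((n - 2 : ℕ) : ℝ) * ((n - 1 : ℕ) : ℝ) * (n : ℝ)) := by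
  obtain ⟨k, rfl⟩ : ∃ k, n = k + 3 := ⟨n - 3, by omega⟩
  simp [Nat.factorial]
  ring

/-- There is `C > 0` so that for all `m ≥ 5` and `⌊m/2⌋ + 1 ≤ j ≤ m`,
`(m! / (j! (m-j)!)) · (j-3)! · (m-j-2)!^{1/4} · (m-j)!^{3/4} / (m-3)! ≤ C`
(with `n! = 1` for negative `n`). -/
theorem stmt8 : ∃ C : ℝ, 0 < C ∧ ∀ m j : ℕ, 5 ≤ m → m / 2 + 1 ≤ j → j ≤ m →
    ((Nat.factorial m : ℝ) / ((Nat.factorial j : ℝ) * (Nat.factorial (m - j) : ℝ))) *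
      (Nat.factorial (j - 3) : ℝ) *
      ((Nat.factorial (m - j - 2) : ℝ)) ^ ((1 : ℝ)/4) *
      ((Nat.factorial (m - j) : ℝ)) ^ ((3 : ℝ)/4) / (Nat.factorial (m - 3) : ℝ) ≤ C := by
  refine ⟨12, by norm_num, ?_⟩
  intro m j hm hj1 hj2
  have hj3 : 3 ≤ j := by omega
  set a : ℝ := (Nat.factorial (m - j) : ℝ) with ha
  set b : ℝ := (Nat.factorial (m - j - 2) : ℝ) with hb
  have ha0 : (0 : ℝ) < a := by rw [ha]; exact_mod_cast Nat.factorial_pos _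
  have hb0 : (0 : ℝ) < b := by rw [hb]; exact_mod_cast Nat.factorial_pos _
  have hba : b ≤ a := by
    rw [ha, hb]
    exact_mod_cast Nat.factorial_le (Nat.sub_le _ _)
  have hmfac := fac3_expand m (by omega)
  have hjfac := fac3_expand j hj3
  have hjf0 : (0 : ℝ) < (Nat.factorial (j - 3) : ℝ) := by exact_mod_cast Nat.factorial_pos _
  have hmf0 : (0 : ℝ) < (Nat.factorial (m - 3) : ℝ) := by exact_mod_cast Nat.factorial_pos _
  have hP0 : (0 : ℝ) < ((j - 2 : ℕ) : ℝ) * ((j - 1 : ℕ) : ℝ) * (j : ℝ) := by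
    have h1 : (0:ℕ) < j - 2 := by omega
    have h2 : (0:ℕ) < j - 1 := by omega
    have h3 : (0:ℕ) < j := by omega
    positivity
  -- rewrite the expression as a product of two factors
  have key : ((Nat.factorial m : ℝ) / ((Nat.factorial j : ℝ) * a)) *
      (Nat.factorial (j - 3) : ℝ) * b ^ ((1 : ℝ)/4) * a ^ ((3 : ℝ)/4) /
      (Nat.factorial (m - 3) : ℝ)
      = ((((m - 2 : ℕ) : ℝ) * ((m - 1 : ℕ) : ℝ) * (m : ℝ)) /
          (((j - 2 : ℕ) : ℝ) * ((j - 1 : ℕ) : ℝ) * (j : ℝ))) *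
        (b ^ ((1 : ℝ)/4) * a ^ ((3 : ℝ)/4) / a) := by
    rw [hmfac, hjfac]
    rw [div_mul_eq_mul_div, div_mul_eq_mul_div, div_mul_eq_mul_div, div_div,
      div_mul_div_comm, div_eq_div_iff (by positivity) (by positivity)]
    ring
  rw [key]
  have hS : b ^ ((1 : ℝ)/4) * a ^ ((3 : ℝ)/4) / a ≤ 1 := by
    rw [div_le_one ha0]
    have h1 : b ^ ((1 : ℝ)/4) ≤ a ^ ((1 : ℝ)/4) :=
      Real.rpow_le_rpow hb0.le hba (by norm_num)
    have h2 : a ^ ((1 : ℝ)/4) * a ^ ((3 : ℝ)/4) = a := by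
      rw [← Real.rpow_add ha0]; norm_num
    calc b ^ ((1 : ℝ)/4) * a ^ ((3 : ℝ)/4)
        ≤ a ^ ((1 : ℝ)/4) * a ^ ((3 : ℝ)/4) :=
          mul_le_mul_of_nonneg_right h1 (Real.rpow_nonneg ha0.le _)
      _ = a := h2
  have hR : (((m - 2 : ℕ) : ℝ) * ((m - 1 : ℕ) : ℝ) * (m : ℝ)) /
      (((j - 2 : ℕ) : ℝ) * ((j - 1 : ℕ) : ℝ) * (j : ℝ)) ≤ 12 := by
    rw [div_le_iff₀ hP0]
    have hm2 : ((m - 2 : ℕ) : ℝ) = (m : ℝ) - 2 := by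
      push_cast [Nat.cast_sub (by omega : 2 ≤ m)]; ring
    have hm1 : ((m - 1 : ℕ) : ℝ) = (m : ℝ) - 1 := by
      push_cast [Nat.cast_sub (by omega : 1 ≤ m)]; ring
    have hj2' : ((j - 2 : ℕ) : ℝ) = (j : ℝ) - 2 := by
      push_cast [Nat.cast_sub (by omega : 2 ≤ j)]; ring
    have hj1' : ((j - 1 : ℕ) : ℝ) = (j : ℝ) - 1 := by
      push_cast [Nat.cast_sub (by omega : 1 ≤ j)]; ring
    rw [hm2, hm1, hj2', hj1']
    have hmj : (m : ℝ) + 1 ≤ 2 * (j : ℝ) := by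
      have : m + 1 ≤ 2 * j := by omega
      exact_mod_cast this
    have hjr : (3 : ℝ) ≤ (j : ℝ) := by exact_mod_cast hj3
    have hmr : (5 : ℝ) ≤ (m : ℝ) := by exact_mod_cast hm
    have e1 : (m : ℝ) - 2 ≤ 3 * ((j : ℝ) - 2) := by linarith
    have e2 : (m : ℝ) - 1 ≤ 2 * ((j : ℝ) - 1) := by linarith
    have e3 : (m : ℝ) ≤ 2 * (j : ℝ) := by linarith
    have t1 : ((m:ℝ) - 2) * ((m:ℝ) - 1) ≤ (3 * ((j:ℝ) - 2)) * (2 * ((j:ℝ) - 1)) :=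
      mul_le_mul e1 e2 (by linarith) (by linarith)
    have t2 : ((m:ℝ) - 2) * ((m:ℝ) - 1) * (m:ℝ) ≤
        (3 * ((j:ℝ) - 2)) * (2 * ((j:ℝ) - 1)) * (2 * (j:ℝ)) :=
      mul_le_mul t1 e3 (by linarith) (mul_nonneg (by linarith) (by linarith))
    calc ((m:ℝ) - 2) * ((m:ℝ) - 1) * (m:ℝ)
        ≤ (3 * ((j:ℝ) - 2)) * (2 * ((j:ℝ) - 1)) * (2 * (j:ℝ)) := t2
      _ = 12 * (((j:ℝ) - 2) * ((j:ℝ) - 1) * (j:ℝ)) := by ring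
  have hR0 : 0 ≤ (((m - 2 : ℕ) : ℝ) * ((m - 1 : ℕ) : ℝ) * (m : ℝ)) /
      (((j - 2 : ℕ) : ℝ) * ((j - 1 : ℕ) : ℝ) * (j : ℝ)) := by positivity
  have hS0 : 0 ≤ b ^ ((1 : ℝ)/4) * a ^ ((3 : ℝ)/4) / a := by positivity
  calc _ ≤ (12 : ℝ) * 1 := mul_le_mul hR hS hS0 (by norm_num)
    _ = 12 := by norm_num
end
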